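/- Let {X_t} satisfy Assumption L, let i ∈ B, and let S_0 = 0, S_m = min{t > S_{m−1} : X_t ∈ B} denote the successive visit times to B. Then for any positive integer W and any real Z ≥ W, P_i(S_W > Z) ≤ exp( (0.8(1−ρ)/e^{η ν_max}) · ( 1.25·W·e^{2η ν_max}/((1−ρ)(e^{η ν_max} − ρ)) + W − Z ) ). -/

import Mathlib

open MeasureTheory ProbabilityTheory Finset Set
open scoped ENNReal NNReal Classical

namespace LocalStationary

noncomputable section

/-- First return time (≥ 1) of a trajectory `f` to the state `i`, valued in `ℕ∞`
(it equals `⊤` if the trajectory never returns to `i`). -/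
def hit {S : Type*} (i : S) (f : ℕ → S) : ℕ∞ :=
  sInf {n : ℕ∞ | ∃ m : ℕ, n = m ∧ 1 ≤ m ∧ f m = i}

/-- Truncated return time `min(T_i, θ)` as a natural number. -/
def truncHit {S : Type*} (i : S) (θ : ℕ) (f : ℕ → S) : ℕ :=
  (min (hit i f) (θ : ℕ∞)).toNat

/-- Number of visits to `j` among the first `min(T_i, θ)` steps of the trajectory. -/
def visits {S : Type*} (i j : S) (θ : ℕ) (f : ℕ → S) : ℕ :=
  ((Finset.Icc 1 (truncHit i θ f)).filter fun s => f s = j).card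

/-- A discrete-time time-homogeneous Markov chain on a state space `S`, described by
the laws `μ x` of its trajectories started at each state `x`, together with its
transition matrix `trans`. -/
structure Chain (S : Type*) [MeasurableSpace S] where
  μ : S → Measure (ℕ → S)
  isProb : ∀ x, IsProbabilityMeasure (μ x)
  start : ∀ x, μ x {f | f 0 = x} = 1
  trans : S → S → ℝ≥0∞
  trans_sum : ∀ x, ∑' y, trans x y = 1
  markov : ∀ x (n : ℕ) (s : ℕ → S),
    μ x {f | ∀ k ≤ n + 1, f k = s k} =
      μ x {f | ∀ k ≤ n, f k = s k} * trans (s n) (s (n + 1))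

namespace Chain

variable {S : Type*} [MeasurableSpace S]

/-- Irreducibility: from every state one can reach every other state. -/
def Irreducible (C : Chain S) : Prop :=
  ∀ x y : S, ∃ n : ℕ, 0 < C.μ x {f | f n = y}

/-- Positive recurrence: the return time to each state is almost surely finite and
has finite expectation. -/
def PositiveRecurrent (C : Chain S) : Prop :=
  ∀ x : S, C.μ x {f | hit x f = ⊤} = 0 ∧
    Integrable (fun f => ((hit x f).toNat : ℝ)) (C.μ x)

/-- Aperiodicity: for each state, the only common divisor of the possible return
times is `1`. -/
def Aperiodic (C : Chain S) : Prop :=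
  ∀ x : S, ∀ d : ℕ, (∀ n : ℕ, 1 ≤ n → 0 < C.μ x {f | f n = x} → d ∣ n) → d ∣ 1

/-- `E_x[T_i]`, the expected hitting time of `i` starting from `x`. -/
def ERet (C : Chain S) (x i : S) : ℝ :=
  ∫ f, ((hit i f).toNat : ℝ) ∂ C.μ x

/-- The stationary probability `π_i = 1 / E_i[T_i]`. -/
def statPi (C : Chain S) (i : S) : ℝ := (C.ERet i i)⁻¹

/-- The truncated mean `E_i[min(T_i, θ)]`. -/
def EThat (C : Chain S) (i : S) (θ : ℕ) : ℝ :=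
  ∫ f, (truncHit i θ f : ℝ) ∂ C.μ i

/-- `E_i[F̂_j] = E_i[Σ_{s=1}^{min(T_i,θ)} 1{X_s = j}]`. -/
def EVisits (C : Chain S) (i j : S) (θ : ℕ) : ℝ :=
  ∫ f, (visits i j θ f : ℝ) ∂ C.μ i

/-- `P_i(T_i > k)`, as a real number. -/
def tailP (C : Chain S) (i : S) (k : ℕ) : ℝ :=
  (C.μ i {f | (k : ℕ∞) < hit i f}).toReal

/-- The maximal hitting time `H_i = max_x E_x[T_i]`. -/
def maxHit (C : Chain S) (i : S) : ℝ := ⨆ x : S, C.ERet x i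

/-- Entry `Z_{jk} = Σ_{t=0}^∞ (P^{(t)}_{jk} − π_k)` of the fundamental matrix. -/
def Zfun (C : Chain S) (j k : S) : ℝ :=
  ∑' t : ℕ, ((C.μ j {f | f t = k}).toReal - C.statPi k)

/-- `Z_max(i) = max_k |Z_{ki}|`. -/
def Zmax (C : Chain S) (i : S) : ℝ := ⨆ k : S, |C.Zfun k i|

end Chain


/-- Lyapunov data witnessing Assumption L for the chain `C`: a nonnegative function `V`
with bounded jumps along transitions, uniform negative drift `−γ` outside the finite
sublevel set `B = {x | V x ≤ b}`. -/
structure LyapunovData {S : Type*} [MeasurableSpace S] (C : Chain S) where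
  V : S → ℝ
  nuMax : ℝ
  gam : ℝ
  b : ℝ
  V_nonneg : ∀ x, 0 ≤ V x
  nuMax_pos : 0 < nuMax
  gam_pos : 0 < gam
  b_nonneg : 0 ≤ b
  finiteB : {x : S | V x ≤ b}.Finite
  bounded_jump : ∀ x y, C.trans x y ≠ 0 → |V y - V x| ≤ nuMax
  drift : ∀ x, b < V x → ∑' y, (C.trans x y).toReal * (V y - V x) < -gam

namespace LyapunovData

variable {S : Type*} [MeasurableSpace S] {C : Chain S}

/-- The finite set `B = {x | V x ≤ b}`. -/
def B (L : LyapunovData C) : Set S := {x | L.V x ≤ L.b}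

/-- `η = γ / (2(e−2)ν_max²)`. -/
def eta (L : LyapunovData C) : ℝ := L.gam / (2 * (Real.exp 1 - 2) * L.nuMax ^ 2)

/-- `ρ = 1 − γ² / (4(e−2)ν_max²)`. -/
def rho (L : LyapunovData C) : ℝ := 1 - L.gam ^ 2 / (4 * (Real.exp 1 - 2) * L.nuMax ^ 2)

/-- The number of time-steps `1 ≤ s ≤ T_i` at which the trajectory is in `B`, i.e. the
hitting time of `i` for the chain watched on its successive visits to `B`. -/
def watchCount (L : LyapunovData C) (i : S) (f : ℕ → S) : ℕ :=
  ((Finset.Icc 1 ((hit i f).toNat)).filter fun s => f s ∈ L.B).card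

/-- `H_i^B`: the maximal (over starting states in `B`) expected hitting time of `i`
for the chain watched on `B`. -/
def HB (L : LyapunovData C) (i : S) : ℝ :=
  ⨆ j : L.B, ∫ f, (L.watchCount i f : ℝ) ∂ C.μ (j : S)

/-- The constant `R_i` of the paper. -/
def R (L : LyapunovData C) (i : S) : ℝ :=
  2 * L.HB i * (1.25 * Real.exp (2 * L.eta * L.nuMax) /
      ((1 - L.rho) * (Real.exp (L.eta * L.nuMax) - L.rho)) + 1) +
    Real.log 2 * Real.exp (L.eta * L.nuMax) / (0.8 * (1 - L.rho))

/-- `S_m`, the time of the `m`-th visit (after time 0) of the trajectory to `B`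
(equal to `⊤` if there is no such visit). -/
def visitTime (L : LyapunovData C) (f : ℕ → S) : ℕ → ℕ∞
  | 0 => 0
  | m + 1 => sInf {n : ℕ∞ | ∃ k : ℕ, n = (k : ℕ∞) ∧ visitTime L f m < (k : ℕ∞) ∧ f k ∈ L.B}

end LyapunovData


/-!
Write `a = η ν_max` and `N_T` for the number of times `1 ≤ t ≤ T` spent in `B`; then `S_W > Z`
is the event `N_⌊Z⌋ < W`. If `B ≠ S` the drift forces `γ < ν_max`, i.e. `2(e-2)a < 1`, so every
jump `z` of `ηV` satisfies `|z| ≤ a < 9/10`, where `e^z ≤ 1 + z + (e-2)z²`; averaging against the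
drift gives `E_x[e^{η(V(X₁) - V(x))}] ≤ 1 - ηγ + (e-2)a² = ρ` off `B`.

Let `ψ = e^{a+λ}` on `B` and `ψ = e^{η(V-b)}` off `B`, with `λ = 0.8(1-ρ)/e^a` and
`q = e^a/(e^a - ρ)`. Since `ρ ≤ 1 - λ ≤ e^{-λ}`, and since `q ≥ 2a` makes the value `e^{a-q}` on
`B` at most `e^{η(V-b)}` for every state reachable from outside `B`, the process
`e^{λt} e^{-(q+λ)N_t} ψ(X_t)` is a supermartingale. As `ψ ≥ 1`, first-step analysis yields
`P_i(N_T ≤ m) ≤ e^{-λT} e^{(q+λ)m} e^{a+λ}`, and `a + λ ≤ 2a ≤ q` absorbs the rounding of `Z`.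
-/

theorem exp_one_sub_two_pos : 0 < Real.exp 1 - 2 := by
  linarith [Real.exp_one_gt_d9]

theorem exp_le_one_add_add_exp_one_sub_two_mul_sq {z : ℝ} (hz : |z| ≤ 9 / 10) :
    Real.exp z ≤ 1 + z + (Real.exp 1 - 2) * z ^ 2 := by
  -- third-order Taylor: the remainder `(2/9)|z|³` is at most `z²/5`, and `1/2 + 1/5 < e - 2`
  have h := (abs_le.mp (Real.exp_bound (hz.trans (by norm_num)) (n := 3) (by norm_num))).2
  norm_num [Finset.sum_range_succ, Nat.factorial] at h
  have hcube : |z| ^ 3 ≤ 9 / 10 * z ^ 2 := by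
    rw [pow_succ, sq_abs, mul_comm]
    exact mul_le_mul_of_nonneg_right hz (sq_nonneg z)
  nlinarith [Real.exp_one_gt_d9, sq_nonneg z]

theorem two_mul_mul_exp_sub_one_add_le_exp {a : ℝ} (ha : 0 ≤ a)
    (hca : 2 * (Real.exp 1 - 2) * a ≤ 1) :
    2 * a * (Real.exp a - 1 + (Real.exp 1 - 2) * a ^ 2) ≤ Real.exp a := by
  have hc : 0.7 ≤ Real.exp 1 - 2 := by linarith [Real.exp_one_gt_d9]
  have ha' : a ≤ 9 / 10 := by nlinarith
  have hexp := exp_le_one_add_add_exp_one_sub_two_mul_sq (z := a) (by rwa [abs_of_nonneg ha])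
  have hsq : (Real.exp 1 - 2) * a ^ 2 ≤ a / 2 := by nlinarith
  rcases le_total a (1 / 2) with hsmall | hlarge
  · nlinarith [Real.add_one_le_exp a, mul_nonneg ha (sq_nonneg a)]
  · nlinarith [mul_le_mul_of_nonneg_left hexp (by linarith : (0:ℝ) ≤ 2 * a - 1),
      mul_nonneg (by linarith : (0:ℝ) ≤ a / 2 - (Real.exp 1 - 2) * a ^ 2)
        (by linarith : (0:ℝ) ≤ 4 * a - 1)]

section visitCount

variable {S : Type*} (B : Set S) (f : ℕ → S)

def visitCount (T : ℕ) : ℕ :=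
  ∑ k ∈ range T, if f (k + 1) ∈ B then 1 else 0

lemma visitCount_succ (T : ℕ) :
    visitCount B f (T + 1) = visitCount B f T + if f (T + 1) ∈ B then 1 else 0 :=
  sum_range_succ _ _

lemma visitCount_mono : Monotone (visitCount B f) :=
  fun _ _ h => sum_le_sum_of_subset (range_subset_range.mpr h)

end visitCount

namespace Chain

variable {S : Type*} [MeasurableSpace S] (C : Chain S)

lemma trans_ne_top (x y : S) : C.trans x y ≠ ⊤ :=
  ne_top_of_le_ne_top ENNReal.one_ne_top ((ENNReal.le_tsum y).trans (C.trans_sum x).le)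

lemma summable_trans_toReal (x : S) : Summable fun y => (C.trans x y).toReal :=
  ENNReal.summable_toReal (by rw [C.trans_sum x]; exact ENNReal.one_ne_top)

lemma tsum_trans_toReal (x : S) : ∑' y, (C.trans x y).toReal = 1 := by
  rw [← ENNReal.tsum_toReal_eq (C.trans_ne_top x), C.trans_sum x, ENNReal.toReal_one]

lemma summable_trans_toReal_mul {x : S} {g : S → ℝ} {c : ℝ}
    (hg : ∀ y, C.trans x y ≠ 0 → |g y| ≤ c) : Summable fun y => (C.trans x y).toReal * g y :=
  ((C.summable_trans_toReal x).mul_right c).of_norm_bounded fun y => by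
    rw [Real.norm_eq_abs, abs_mul, ENNReal.abs_toReal]
    by_cases h : C.trans x y = 0
    · simp [h]
    · exact mul_le_mul_of_nonneg_left (hg y h) ENNReal.toReal_nonneg

lemma tsum_trans_mul_ofReal {x : S} {g : S → ℝ} (hg : ∀ y, 0 ≤ g y)
    (hs : Summable fun y => (C.trans x y).toReal * g y) :
    ∑' y, C.trans x y * ENNReal.ofReal (g y) =
      ENNReal.ofReal (∑' y, (C.trans x y).toReal * g y) := by
  rw [ENNReal.ofReal_tsum_of_nonneg (fun y => mul_nonneg ENNReal.toReal_nonneg (hg y)) hs]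
  refine tsum_congr fun y => ?_
  rw [ENNReal.ofReal_mul ENNReal.toReal_nonneg, ENNReal.ofReal_toReal (C.trans_ne_top x y)]

def pathWeight {T : ℕ} (s : Fin (T + 1) → S) : ℝ≥0∞ :=
  ∏ k : Fin T, C.trans (s k.castSucc) (s k.succ)

lemma pathWeight_cons {T : ℕ} (y : S) (t : Fin (T + 1) → S) :
    C.pathWeight (Fin.cons y t : Fin (T + 2) → S) = C.trans y (t 0) * C.pathWeight t := by
  simp only [pathWeight, Fin.prod_univ_succ, Fin.castSucc_zero, Fin.cons_zero, Fin.cons_succ,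
    ← Fin.succ_castSucc]

variable [MeasurableSingletonClass S]

lemma measure_setOf_apply_zero_eq (x y : S) : C.μ x {f | f 0 = y} = if y = x then 1 else 0 := by
  split_ifs with h
  · exact h ▸ C.start x
  · have := C.isProb x
    have hmeas : MeasurableSet {f : ℕ → S | f 0 = x} :=
      (measurableSet_singleton x).preimage (measurable_pi_apply 0)
    have hnull : C.μ x {f | f 0 = x}ᶜ = 0 := by
      rw [prob_compl_eq_one_sub hmeas, C.start x, tsub_self]
    exact measure_mono_null (fun f hy hx => h (hy.symm.trans hx)) hnull

lemma measure_cylinder (x : S) (s : ℕ → S) (n : ℕ) :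
    C.μ x {f | ∀ k ≤ n, f k = s k} =
      (if s 0 = x then 1 else 0) * ∏ k ∈ range n, C.trans (s k) (s (k + 1)) := by
  induction n with
  | zero => simp [C.measure_setOf_apply_zero_eq]
  | succ n ih => rw [C.markov, ih, prod_range_succ, mul_assoc]

lemma measure_pathCylinder (x : S) {T : ℕ} (s : Fin (T + 1) → S) :
    C.μ x {f | ∀ k : Fin (T + 1), f k = s k} = if s 0 = x then C.pathWeight s else 0 := by
  have hcyl : {f : ℕ → S | ∀ k : Fin (T + 1), f k = s k} =
      {f | ∀ k ≤ T, f k = s (Fin.ofNat (T + 1) k)} := by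
    ext f
    refine ⟨fun h k hk => ?_, fun h k => by simpa using h k (Fin.is_le k)⟩
    simpa [Nat.mod_eq_of_lt (Nat.lt_succ_of_le hk)] using h (Fin.ofNat (T + 1) k)
  have hweight : ∏ k ∈ range T,
      C.trans (s (Fin.ofNat (T + 1) k)) (s (Fin.ofNat (T + 1) (k + 1))) = C.pathWeight s := by
    rw [pathWeight, ← Fin.prod_univ_eq_prod_range]
    refine prod_congr rfl fun k _ => ?_
    congr <;> ext <;> simp [Nat.mod_eq_of_lt]
  rw [hcyl, C.measure_cylinder, hweight]
  simp

variable [Countable S]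

lemma measure_eq_tsum_pathWeight (x : S) {T : ℕ} (p : (Fin (T + 1) → S) → Prop) :
    C.μ x {f | p (fun k : Fin (T + 1) => f k)} =
      ∑' s, if s 0 = x ∧ p s then C.pathWeight s else 0 := by
  have hR : Measurable fun (f : ℕ → S) (k : Fin (T + 1)) => f k :=
    measurable_pi_lambda _ fun k => measurable_pi_apply _
  rw [show {f : ℕ → S | p fun k => f k} = (fun f (k : Fin (T + 1)) => f k) ⁻¹' {s | p s} from rfl,
    ← Measure.map_apply hR (MeasurableSet.of_discrete (s := {s | p s})),
    ← Measure.tsum_indicator_apply_singleton _ _ MeasurableSet.of_discrete]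
  refine tsum_congr fun s => ?_
  have hcyl : (fun (f : ℕ → S) (k : Fin (T + 1)) => f k) ⁻¹' {s} =
      {f | ∀ k : Fin (T + 1), f k = s k} := by
    ext f; simp [funext_iff]
  simp only [Set.indicator_apply]
  rw [Measure.map_apply hR (measurableSet_singleton s), hcyl, C.measure_pathCylinder]
  by_cases hp : p s <;> simp [hp]

lemma measure_eq_tsum_trans_mul_measure (x : S) {T : ℕ} (q : S → (Fin (T + 1) → S) → Prop) :
    C.μ x {f | q (f 1) (fun k : Fin (T + 1) => f (k + 1))} =
      ∑' y, C.trans x y * C.μ y {f | q y (fun k : Fin (T + 1) => f k)} := by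
  have hset : {f : ℕ → S | q (f 1) (fun k : Fin (T + 1) => f (k + 1))} =
      {f | (fun s : Fin (T + 2) → S => q (s 1) (Fin.tail s)) (fun k => f k)} := rfl
  rw [hset, C.measure_eq_tsum_pathWeight x fun s : Fin (T + 2) → S => q (s 1) (Fin.tail s)]
  simp_rw [C.measure_eq_tsum_pathWeight, ← ENNReal.tsum_mul_left]
  rw [← (Fin.consEquiv fun _ : Fin (T + 2) => S).tsum_eq, ENNReal.tsum_prod',
    tsum_eq_single x fun y hy => by simp [Fin.consEquiv, hy], ENNReal.tsum_comm]
  refine tsum_congr fun t => ?_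
  rw [tsum_eq_single (t 0) fun y hy => by simp [Ne.symm hy]]
  simp [Fin.consEquiv, Fin.cons_one, Fin.tail_cons, C.pathWeight_cons]

lemma measure_visitCount_succ_lt (B : Set S) (x : S) (T m : ℕ) :
    C.μ x {f | visitCount B f (T + 1) < m + 1} =
      ∑' y, C.trans x y * C.μ y {f | visitCount B f T < if y ∈ B then m else m + 1} := by
  let q : S → (Fin (T + 1) → S) → Prop := fun y t =>
    (if y ∈ B then 1 else 0) + ∑ k : Fin T, (if t k.succ ∈ B then 1 else 0) < m + 1
  have hpath (f : ℕ → S) (d : ℕ) : ∑ k : Fin T, (if f (k.succ + d) ∈ B then 1 else 0) =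
      ∑ k ∈ range T, (if f (k + 1 + d) ∈ B then 1 else 0) :=
    Fin.sum_univ_eq_sum_range (fun k => if f (k + 1 + d) ∈ B then 1 else 0) T
  have hlhs : {f | visitCount B f (T + 1) < m + 1} =
      {f | q (f 1) (fun k : Fin (T + 1) => f (k + 1))} := by
    ext f
    simp only [Set.mem_ofPred_eq, q, visitCount, sum_range_succ', hpath f 1, zero_add, add_comm]
  have hrhs (y : S) : {f | q y (fun k : Fin (T + 1) => f k)} =
      {f | visitCount B f T < if y ∈ B then m else m + 1} := by
    ext f
    have := hpath f 0
    simp only [Set.mem_ofPred_eq, q, visitCount, add_zero] at this ⊢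
    rw [this]
    split_ifs <;> omega
  rw [hlhs, C.measure_eq_tsum_trans_mul_measure]
  simp_rw [hrhs]

theorem measure_visitCount_lt_le (B : Set S) {ψ k : S → ℝ≥0∞} {M r : ℝ≥0∞} (hM : 1 ≤ M)
    (hψ : ∀ x, 1 ≤ ψ x) (hk : ∀ y, ψ y ≤ (if y ∈ B then M else 1) * k y)
    (hdrift : ∀ x, ∑' y, C.trans x y * k y ≤ r * ψ x) (T m : ℕ) (x : S) :
    C.μ x {f | visitCount B f T < m + 1} ≤ r ^ T * M ^ m * ψ x := by
  induction T generalizing m x with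
  | zero =>
    have := C.isProb x
    simp only [visitCount, range_zero, sum_empty, Nat.zero_lt_succ, Set.ofPred_true,
      measure_univ, pow_zero, one_mul]
    exact (hψ x).trans (le_mul_of_one_le_left' (one_le_pow₀ hM))
  | succ T ih =>
    have hstep (y : S) : C.μ y {f | visitCount B f T < if y ∈ B then m else m + 1} ≤
        r ^ T * M ^ m * k y := by
      by_cases hy : y ∈ B
      · rcases m with _ | m
        · simp [hy]
        · have := hk y
          rw [if_pos hy] at this ⊢
          calc C.μ y {f | visitCount B f T < m + 1} ≤ r ^ T * M ^ m * ψ y := ih m y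
            _ ≤ r ^ T * M ^ m * (M * k y) := by gcongr
            _ = r ^ T * M ^ (m + 1) * k y := by ring
      · have := hk y
        rw [if_neg hy, one_mul] at this
        rw [if_neg hy]
        exact (ih m y).trans (by gcongr)
    calc C.μ x {f | visitCount B f (T + 1) < m + 1}
        = ∑' y, C.trans x y * C.μ y {f | visitCount B f T < if y ∈ B then m else m + 1} :=
          C.measure_visitCount_succ_lt B x T m
      _ ≤ ∑' y, C.trans x y * (r ^ T * M ^ m * k y) := by gcongr with y; exact hstep y
      _ = r ^ T * M ^ m * ∑' y, C.trans x y * k y := by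
          rw [← ENNReal.tsum_mul_left]; congr 1 with y; ring
      _ ≤ r ^ T * M ^ m * (r * ψ x) := by gcongr; exact hdrift x
      _ = r ^ (T + 1) * M ^ m * ψ x := by ring

end Chain

namespace LyapunovData

variable {S : Type*} [MeasurableSpace S] {C : Chain S} (L : LyapunovData C)

lemma eta_pos : 0 < L.eta :=
  div_pos L.gam_pos (by have := exp_one_sub_two_pos; have := L.nuMax_pos; positivity)

lemma eta_mul_nuMax_nonneg : 0 ≤ L.eta * L.nuMax :=
  mul_nonneg L.eta_pos.le L.nuMax_pos.le

lemma gam_eq : L.gam = 2 * (Real.exp 1 - 2) * (L.eta * L.nuMax) * L.nuMax := by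
  have := exp_one_sub_two_pos.ne'
  have := L.nuMax_pos.ne'
  unfold eta
  field_simp

lemma rho_eq : L.rho = 1 - (Real.exp 1 - 2) * (L.eta * L.nuMax) ^ 2 := by
  have := exp_one_sub_two_pos.ne'
  have := L.nuMax_pos.ne'
  unfold rho eta
  field_simp
  ring

lemma summable_trans_toReal_mul_sub (x : S) :
    Summable fun y => (C.trans x y).toReal * (L.V y - L.V x) :=
  C.summable_trans_toReal_mul fun y hy => L.bounded_jump x y hy

lemma summable_trans_toReal_mul_exp (x : S) {θ : ℝ} (hθ : 0 ≤ θ) :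
    Summable fun y => (C.trans x y).toReal * Real.exp (θ * (L.V y - L.V x)) :=
  C.summable_trans_toReal_mul (c := Real.exp (θ * L.nuMax)) fun y hy => by
    rw [abs_of_pos (Real.exp_pos _)]
    exact Real.exp_le_exp.mpr (mul_le_mul_of_nonneg_left (le_of_abs_le (L.bounded_jump x y hy)) hθ)

lemma gam_lt_nuMax {x : S} (hx : x ∉ L.B) : L.gam < L.nuMax := by
  have hjump : -L.nuMax ≤ ∑' y, (C.trans x y).toReal * (L.V y - L.V x) :=
    calc -L.nuMax = ∑' y, (C.trans x y).toReal * (-L.nuMax) := by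
          rw [tsum_mul_right, C.tsum_trans_toReal, one_mul]
      _ ≤ _ := by
        refine ((C.summable_trans_toReal x).mul_right _).tsum_le_tsum (fun y => ?_)
          (L.summable_trans_toReal_mul_sub x)
        by_cases h : C.trans x y = 0
        · simp [h]
        · exact mul_le_mul_of_nonneg_left (neg_le_of_abs_le (L.bounded_jump x y h))
            ENNReal.toReal_nonneg
  linarith [L.drift x (lt_of_not_ge hx)]

lemma two_mul_eta_mul_nuMax_le {x : S} (hx : x ∉ L.B) :
    2 * (Real.exp 1 - 2) * (L.eta * L.nuMax) ≤ 1 := by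
  have hν := L.nuMax_pos
  have h := L.gam_lt_nuMax hx
  rw [L.gam_eq] at h
  nlinarith

lemma tsum_trans_mul_exp_le {x : S} (hx : x ∉ L.B) {θ : ℝ} (hθ : 0 ≤ θ)
    (hθν : θ * L.nuMax ≤ 9 / 10) :
    ∑' y, (C.trans x y).toReal * Real.exp (θ * (L.V y - L.V x)) ≤
      1 - θ * L.gam + (Real.exp 1 - 2) * (θ * L.nuMax) ^ 2 := by
  set c := (Real.exp 1 - 2) * (θ * L.nuMax) ^ 2
  have hbound (y : S) (hy : C.trans x y ≠ 0) : |θ * (L.V y - L.V x)| ≤ θ * L.nuMax := by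
    rw [abs_mul, abs_of_nonneg hθ]
    exact mul_le_mul_of_nonneg_left (L.bounded_jump x y hy) hθ
  have hpt (y : S) : (C.trans x y).toReal * Real.exp (θ * (L.V y - L.V x)) ≤
      (C.trans x y).toReal * (1 + c) + θ * ((C.trans x y).toReal * (L.V y - L.V x)) := by
    by_cases hy : C.trans x y = 0
    · simp [hy]
    have hsq : (θ * (L.V y - L.V x)) ^ 2 ≤ (θ * L.nuMax) ^ 2 := by
      rw [← sq_abs]
      exact pow_le_pow_left₀ (abs_nonneg _) (hbound y hy) 2
    have hexp := exp_le_one_add_add_exp_one_sub_two_mul_sq ((hbound y hy).trans hθν)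
    have hr : 0 ≤ (C.trans x y).toReal := ENNReal.toReal_nonneg
    have hc := exp_one_sub_two_pos
    nlinarith [mul_le_mul_of_nonneg_left hexp hr, mul_le_mul_of_nonneg_left hsq hr]
  calc ∑' y, (C.trans x y).toReal * Real.exp (θ * (L.V y - L.V x))
      ≤ ∑' y, ((C.trans x y).toReal * (1 + c) +
          θ * ((C.trans x y).toReal * (L.V y - L.V x))) :=
        (L.summable_trans_toReal_mul_exp x hθ).tsum_le_tsum hpt (((C.summable_trans_toReal x).mul_right _).add
          ((L.summable_trans_toReal_mul_sub x).mul_left θ))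
    _ = (1 + c) + θ * ∑' y, (C.trans x y).toReal * (L.V y - L.V x) := by
        rw [Summable.tsum_add ((C.summable_trans_toReal x).mul_right _)
          ((L.summable_trans_toReal_mul_sub x).mul_left θ), tsum_mul_right, tsum_mul_left,
          C.tsum_trans_toReal, one_mul]
    _ ≤ 1 - θ * L.gam + c := by
        nlinarith [mul_le_mul_of_nonneg_left (L.drift x (lt_of_not_ge hx)).le hθ]

lemma tsum_trans_mul_exp_eta_le_rho {x : S} (hx : x ∉ L.B) :
    ∑' y, (C.trans x y).toReal * Real.exp (L.eta * (L.V y - L.V x)) ≤ L.rho := by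
  have hην : L.eta * L.nuMax ≤ 9 / 10 := by
    nlinarith [L.two_mul_eta_mul_nuMax_le hx, Real.exp_one_gt_d9, L.eta_mul_nuMax_nonneg]
  have hηγ : L.eta * L.gam = 2 * (Real.exp 1 - 2) * (L.eta * L.nuMax) ^ 2 := by
    rw [L.gam_eq]; ring
  linarith [L.tsum_trans_mul_exp_le hx L.eta_pos.le hην, L.rho_eq]

def expPotential (c : ℝ) (x : S) : ℝ≥0∞ :=
  ENNReal.ofReal (if x ∈ L.B then Real.exp c else Real.exp (L.eta * (L.V x - L.b)))

lemma one_le_expPotential {c : ℝ} (hc : 0 ≤ c) (x : S) : 1 ≤ L.expPotential c x := by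
  rw [expPotential, ENNReal.one_le_ofReal]
  split_ifs with hx
  · exact Real.one_le_exp hc
  · exact Real.one_le_exp (mul_nonneg L.eta_pos.le (sub_nonneg.mpr (not_le.mp hx).le))

lemma expPotential_add (c d : ℝ) (x : S) :
    L.expPotential (c + d) x =
      (if x ∈ L.B then ENNReal.ofReal (Real.exp d) else 1) * L.expPotential c x := by
  unfold expPotential
  split_ifs
  · rw [← ENNReal.ofReal_mul (Real.exp_pos d).le, ← Real.exp_add, add_comm]
  · rw [one_mul]

lemma tsum_trans_mul_expPotential_le_of_mem {c : ℝ} (hc : c ≤ L.eta * L.nuMax) {x : S}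
    (hx : x ∈ L.B) :
    ∑' y, C.trans x y * L.expPotential c y ≤ ENNReal.ofReal (Real.exp (L.eta * L.nuMax)) :=
  calc ∑' y, C.trans x y * L.expPotential c y
      ≤ ∑' y, C.trans x y * ENNReal.ofReal (Real.exp (L.eta * L.nuMax)) := by
        refine ENNReal.tsum_le_tsum fun y => ?_
        by_cases hxy : C.trans x y = 0
        · simp [hxy]
        refine mul_le_mul_right (ENNReal.ofReal_le_ofReal ?_) _
        split_ifs
        · exact Real.exp_le_exp.mpr hc
        · refine Real.exp_le_exp.mpr (mul_le_mul_of_nonneg_left ?_ L.eta_pos.le)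
          linarith [(abs_le.mp (L.bounded_jump x y hxy)).2, show L.V x ≤ L.b from hx]
    _ = _ := by rw [ENNReal.tsum_mul_right, C.trans_sum x, one_mul]

lemma tsum_trans_mul_expPotential_le_of_notMem {c : ℝ} (hc : c ≤ -(L.eta * L.nuMax))
    {x : S} (hx : x ∉ L.B) :
    ∑' y, C.trans x y * L.expPotential c y ≤
      ENNReal.ofReal L.rho * ENNReal.ofReal (Real.exp (L.eta * (L.V x - L.b))) := by
  have hx' : L.b < L.V x := lt_of_not_ge hx
  calc ∑' y, C.trans x y * L.expPotential c y
      ≤ ∑' y, C.trans x y * ENNReal.ofReal (Real.exp (L.eta * (L.V y - L.b))) := by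
        refine ENNReal.tsum_le_tsum fun y => ?_
        by_cases hxy : C.trans x y = 0
        · simp [hxy]
        refine mul_le_mul_right (ENNReal.ofReal_le_ofReal ?_) _
        split_ifs
        · refine Real.exp_le_exp.mpr (hc.trans ?_)
          rw [← mul_neg]
          refine mul_le_mul_of_nonneg_left ?_ L.eta_pos.le
          linarith [(abs_le.mp (L.bounded_jump x y hxy)).1]
        · exact le_rfl
    _ = ENNReal.ofReal (Real.exp (L.eta * (L.V x - L.b))) *
          ∑' y, C.trans x y * ENNReal.ofReal (Real.exp (L.eta * (L.V y - L.V x))) := by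
        rw [← ENNReal.tsum_mul_left]
        refine tsum_congr fun y => ?_
        rw [mul_left_comm, ← ENNReal.ofReal_mul (Real.exp_pos _).le, ← Real.exp_add]
        ring_nf
    _ ≤ ENNReal.ofReal (Real.exp (L.eta * (L.V x - L.b))) * ENNReal.ofReal L.rho := by
        rw [C.tsum_trans_mul_ofReal (fun y => (Real.exp_pos _).le)
          (L.summable_trans_toReal_mul_exp x L.eta_pos.le)]
        gcongr
        exact L.tsum_trans_mul_exp_eta_le_rho hx
    _ = _ := mul_comm _ _

lemma tsum_trans_mul_expPotential_le {c l : ℝ} (hc : c ≤ -(L.eta * L.nuMax))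
    (hl : L.rho ≤ Real.exp (-l)) (x : S) :
    ∑' y, C.trans x y * L.expPotential c y ≤
      ENNReal.ofReal (Real.exp (-l)) * L.expPotential (L.eta * L.nuMax + l) x := by
  have ha := L.eta_mul_nuMax_nonneg
  by_cases hx : x ∈ L.B
  · rw [expPotential, if_pos hx, ← ENNReal.ofReal_mul (Real.exp_pos _).le, ← Real.exp_add,
      show -l + (L.eta * L.nuMax + l) = L.eta * L.nuMax by ring]
    exact L.tsum_trans_mul_expPotential_le_of_mem (by linarith) hx
  · rw [expPotential, if_neg hx]
    exact (L.tsum_trans_mul_expPotential_le_of_notMem hc hx).trans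
      (by gcongr)

lemma visitTime_succ_le_iff (f : ℕ → S) (m T : ℕ) :
    L.visitTime f (m + 1) ≤ T ↔ ∃ k ≤ T, L.visitTime f m < k ∧ f k ∈ L.B := by
  rw [visitTime]
  constructor
  · intro h
    by_contra! hne
    have hlow : ((T + 1 : ℕ) : ℕ∞) ≤
        sInf {n : ℕ∞ | ∃ k : ℕ, n = k ∧ L.visitTime f m < k ∧ f k ∈ L.B} := by
      refine le_sInf ?_
      rintro _ ⟨k, rfl, hk, hkB⟩
      by_contra! hkT
      have : k < T + 1 := by exact_mod_cast hkT
      exact hne k (by omega) hk hkB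
    have : T + 1 ≤ T := by exact_mod_cast hlow.trans h
    omega
  · rintro ⟨k, hkT, hk, hkB⟩
    calc _ ≤ (k : ℕ∞) := sInf_le (by exact ⟨k, rfl, hk, hkB⟩)
      _ ≤ T := by exact_mod_cast hkT

lemma visitTime_le_iff (f : ℕ → S) (m T : ℕ) :
    L.visitTime f m ≤ T ↔ m ≤ visitCount L.B f T := by
  induction m generalizing T with
  | zero => simp [visitTime]
  | succ m ih =>
    rw [visitTime_succ_le_iff]
    constructor
    · rintro ⟨_ | j, hkT, hk, hkB⟩
      · simp at hk
      · have hm : m ≤ visitCount L.B f j :=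
          (ih j).mp (ENat.lt_add_one_iff (ENat.natCast_ne_top j) |>.mp (by exact_mod_cast hk))
        calc m + 1 ≤ visitCount L.B f (j + 1) := by rw [visitCount_succ, if_pos hkB]; omega
          _ ≤ visitCount L.B f T := visitCount_mono _ _ hkT
    · intro h
      induction T with
      | zero => simp [visitCount] at h
      | succ T ihT =>
        by_cases hT : m + 1 ≤ visitCount L.B f T
        · obtain ⟨k, hk, h'⟩ := ihT hT
          exact ⟨k, hk.trans T.le_succ, h'⟩
        · have hB : f (T + 1) ∈ L.B := by
            by_contra hB
            rw [visitCount_succ, if_neg hB] at h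
            omega
          rw [visitCount_succ, if_pos hB] at h
          refine ⟨T + 1, le_rfl, ?_, hB⟩
          exact ((ih T).mpr (by omega)).trans_lt (by exact_mod_cast T.lt_succ_self)

lemma setOf_visitTime_gt_eq (W : ℕ) {Z : ℝ} (hZ : 0 ≤ Z) :
    {f | ∀ n : ℕ, L.visitTime f W = n → Z < n} = {f | visitCount L.B f ⌊Z⌋₊ < W} := by
  ext f
  rw [Set.mem_ofPred_eq, Set.mem_ofPred_eq, ← not_le, ← L.visitTime_le_iff, ENat.le_natCast_iff]
  simp only [Nat.le_floor_iff hZ, not_exists, not_and, not_le]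

def stepRate : ℝ := 0.8 * (1 - L.rho) / Real.exp (L.eta * L.nuMax)

def visitRate : ℝ := Real.exp (L.eta * L.nuMax) / (Real.exp (L.eta * L.nuMax) - L.rho)

lemma one_sub_rho_pos : 0 < 1 - L.rho := by
  have := exp_one_sub_two_pos
  have := L.eta_pos
  have := L.nuMax_pos
  rw [L.rho_eq, sub_sub_cancel]
  positivity

lemma rho_lt_exp : L.rho < Real.exp (L.eta * L.nuMax) := by
  linarith [L.one_sub_rho_pos, Real.one_le_exp L.eta_mul_nuMax_nonneg]

lemma exponent_eq_visitRate_mul_add_stepRate_mul (W Z : ℝ) :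
    0.8 * (1 - L.rho) / Real.exp (L.eta * L.nuMax) *
        (1.25 * W * Real.exp (2 * L.eta * L.nuMax) /
            ((1 - L.rho) * (Real.exp (L.eta * L.nuMax) - L.rho)) + W - Z) =
      L.visitRate * W + L.stepRate * (W - Z) := by
  have h1 := L.one_sub_rho_pos.ne'
  have h2 := (sub_pos.mpr L.rho_lt_exp).ne'
  have h3 : Real.exp (2 * L.eta * L.nuMax) = Real.exp (L.eta * L.nuMax) ^ 2 := by
    rw [← Real.exp_nat_mul]; ring_nf
  rw [h3, visitRate, stepRate]
  field_simp
  ring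

lemma stepRate_nonneg : 0 ≤ L.stepRate :=
  div_nonneg (mul_nonneg (by norm_num) L.one_sub_rho_pos.le) (Real.exp_pos _).le

lemma stepRate_le_one_sub_rho : L.stepRate ≤ 1 - L.rho := by
  rw [stepRate, div_le_iff₀ (Real.exp_pos _)]
  have := Real.one_le_exp L.eta_mul_nuMax_nonneg
  nlinarith [L.one_sub_rho_pos]

lemma rho_le_exp_neg_stepRate : L.rho ≤ Real.exp (-L.stepRate) := by
  linarith [L.stepRate_le_one_sub_rho, Real.add_one_le_exp (-L.stepRate)]

lemma stepRate_le {x : S} (hx : x ∉ L.B) : L.stepRate ≤ L.eta * L.nuMax := by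
  have h := L.two_mul_eta_mul_nuMax_le hx
  have ha := L.eta_mul_nuMax_nonneg
  have := L.stepRate_le_one_sub_rho
  rw [L.rho_eq] at this
  nlinarith

lemma two_mul_le_visitRate {x : S} (hx : x ∉ L.B) :
    2 * (L.eta * L.nuMax) ≤ L.visitRate := by
  rw [visitRate, le_div_iff₀ (sub_pos.mpr L.rho_lt_exp), L.rho_eq, sub_sub_eq_add_sub,
    add_sub_right_comm]
  exact two_mul_mul_exp_sub_one_add_le_exp L.eta_mul_nuMax_nonneg
    (L.two_mul_eta_mul_nuMax_le hx)

theorem measure_visitCount_lt_le_of_notMem [MeasurableSingletonClass S] [Countable S]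
    {x₀ i : S} (hx₀ : x₀ ∉ L.B) (hi : i ∈ L.B) (T m : ℕ) :
    C.μ i {f | visitCount L.B f T < m + 1} ≤ ENNReal.ofReal (Real.exp
      (-(L.stepRate * T) + (L.visitRate + L.stepRate) * m + (L.eta * L.nuMax + L.stepRate))) := by
  set a := L.eta * L.nuMax
  set l := L.stepRate
  set q := L.visitRate
  have hl0 : 0 ≤ l := L.stepRate_nonneg
  have hla : l ≤ a := L.stepRate_le hx₀
  have hqa : 2 * a ≤ q := L.two_mul_le_visitRate hx₀
  have key := C.measure_visitCount_lt_le L.B (ψ := L.expPotential (a + l))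
    (k := L.expPotential (a - q)) (M := ENNReal.ofReal (Real.exp (q + l)))
    (r := ENNReal.ofReal (Real.exp (-l)))
    (ENNReal.one_le_ofReal.mpr (Real.one_le_exp (by linarith)))
    (L.one_le_expPotential (by linarith))
    (fun y => le_of_eq (by rw [← L.expPotential_add]; ring_nf))
    (L.tsum_trans_mul_expPotential_le (by linarith) L.rho_le_exp_neg_stepRate) T m i
  rwa [expPotential, if_pos hi, ← ENNReal.ofReal_pow (Real.exp_pos _).le,
    ← ENNReal.ofReal_pow (Real.exp_pos _).le, ← ENNReal.ofReal_mul (by positivity),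
    ← ENNReal.ofReal_mul (by positivity), ← Real.exp_nat_mul, ← Real.exp_nat_mul,
    ← Real.exp_add, ← Real.exp_add, mul_neg, mul_comm (T : ℝ), mul_comm (m : ℝ)] at key

theorem toReal_measure_visitCount_lt_le [MeasurableSingletonClass S] [Countable S] {i : S}
    (hi : i ∈ L.B) {W : ℕ} (hW : 1 ≤ W) {Z : ℝ} (hWZ : (W : ℝ) ≤ Z) :
    (C.μ i {f | visitCount L.B f ⌊Z⌋₊ < W}).toReal ≤
      Real.exp (L.visitRate * W + L.stepRate * (W - Z)) := by
  by_cases hB : ∀ x, x ∈ L.B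
  · have hempty : {f : ℕ → S | visitCount L.B f ⌊Z⌋₊ < W} = ∅ := by
      ext f
      simp [visitCount, hB, Nat.le_floor hWZ]
    rw [hempty, measure_empty, ENNReal.toReal_zero]
    positivity
  obtain ⟨x₀, hx₀⟩ := not_forall.mp hB
  obtain ⟨m, rfl⟩ : ∃ m, W = m + 1 := ⟨W - 1, by omega⟩
  refine ENNReal.toReal_le_of_le_ofReal (Real.exp_pos _).le
    ((L.measure_visitCount_lt_le_of_notMem hx₀ hi ⌊Z⌋₊ m).trans
      (ENNReal.ofReal_le_ofReal (Real.exp_le_exp.mpr ?_)))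
  have hZ : Z - ⌊Z⌋₊ ≤ 1 := by linarith [Nat.lt_floor_add_one Z]
  have hl := mul_le_mul_of_nonneg_left hZ L.stepRate_nonneg
  push_cast
  linarith [L.stepRate_le hx₀, L.two_mul_le_visitRate hx₀]

end LyapunovData

theorem statement18_general {S : Type*} [MeasurableSpace S] [MeasurableSingletonClass S] [Countable S]
    (C : Chain S) (L : LyapunovData C)
    (i : S) (hi : i ∈ L.B) (W : ℕ) (hW : 1 ≤ W) (Z : ℝ) (hZ : (W : ℝ) ≤ Z) :
    (C.μ i {f | ∀ n : ℕ, L.visitTime f W = (n : ℕ∞) → Z < (n : ℝ)}).toReal ≤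
      Real.exp (0.8 * (1 - L.rho) / Real.exp (L.eta * L.nuMax) *
        (1.25 * W * Real.exp (2 * L.eta * L.nuMax) /
            ((1 - L.rho) * (Real.exp (L.eta * L.nuMax) - L.rho)) + W - Z)) := by
  rw [L.setOf_visitTime_gt_eq W ((Nat.cast_nonneg W).trans hZ), L.exponent_eq_visitRate_mul_add_stepRate_mul]
  exact L.toReal_measure_visitCount_lt_le hi hW hZ

/-- Lemma 18 of the paper. For a chain satisfying Assumption L,
`i ∈ B`, a positive integer `W` and a real `Z ≥ W`, the time `S_W` of the `W`-th visit
to `B` satisfies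
`P_i(S_W > Z) ≤ exp((0.8(1−ρ)/e^{ην_max})·(1.25 W e^{2ην_max}/((1−ρ)(e^{ην_max}−ρ)) + W − Z))`. -/
theorem statement18 {S : Type*} [MeasurableSpace S] [MeasurableSingletonClass S] [Countable S]
    (C : Chain S) (hirr : C.Irreducible) (L : LyapunovData C)
    (i : S) (hi : i ∈ L.B) (W : ℕ) (hW : 1 ≤ W) (Z : ℝ) (hZ : (W : ℝ) ≤ Z) :
    (C.μ i {f | ∀ n : ℕ, L.visitTime f W = (n : ℕ∞) → Z < (n : ℝ)}).toReal ≤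
      Real.exp (0.8 * (1 - L.rho) / Real.exp (L.eta * L.nuMax) *
        (1.25 * W * Real.exp (2 * L.eta * L.nuMax) /
            ((1 - L.rho) * (Real.exp (L.eta * L.nuMax) - L.rho)) + W - Z)) :=
  statement18_general C L i hi W hW Z hZ

end

end LocalStationary
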